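/- arXiv:math/0611245 — 2 statements merged into one kernel-verified Lean document; each statement's English description precedes it below -/
import Mathlib

section
/- If B is a function on quadruples satisfying the two cocycle identities B(x,y,z,t) = B(x,y,w,t)·B(w,y,z,t) and B(x,y,z,t) = B(x,y,z,w)·B(x,w,z,t), together with the normalizations B(x,y,z,t) = 0 iff x = y or z = t, and B(x,y,z,t) = 1 iff x = z or y = t, then B satisfies the symmetry B(x,y,z,t) = B(z,t,x,y) for all admissible quadruples. -/
/-- A function satisfying the cross-ratio axioms satisfies the symmetry
`B(x,y,z,t) = B(z,t,x,y)`. -/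
theorem crossRatio_symmetry {S : Type*} (B : S → S → S → S → ℝ)
    (h0 : ∀ x y z t : S, x ≠ t → y ≠ z → (B x y z t = 0 ↔ x = y ∨ z = t))
    (h1 : ∀ x y z t : S, x ≠ t → y ≠ z → (B x y z t = 1 ↔ x = z ∨ y = t))
    (hc1 : ∀ x y z t w : S, x ≠ t → y ≠ z → w ≠ t → y ≠ w →
      B x y z t = B x y w t * B w y z t)
    (hc2 : ∀ x y z t w : S, x ≠ t → y ≠ z → x ≠ w → w ≠ z →
      B x y z t = B x y z w * B x w z t) :
    ∀ x y z t : S, x ≠ t → y ≠ z → B x y z t = B z t x y := by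
  intro x y z t hxt hyz
  by_cases hxy : x = y
  · rw [(h0 x y z t hxt hyz).2 (Or.inl hxy),
      (h0 z t x y hyz.symm hxt.symm).2 (Or.inr hxy)]
  by_cases hzt : z = t
  · rw [(h0 x y z t hxt hyz).2 (Or.inr hzt),
      (h0 z t x y hyz.symm hxt.symm).2 (Or.inl hzt)]
  · have e1 : B x y z t * B z y x t = 1 := by
      have h := hc1 x y x t z hxt (Ne.symm hxy) hzt hyz
      rw [(h1 x y x t hxt (Ne.symm hxy)).2 (Or.inl rfl)] at h
      exact h.symm
    have e2 : B z t x y * B z y x t = 1 := by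
      have h := hc2 z t x t y hzt hxt.symm hyz.symm (Ne.symm hxy)
      rw [(h1 z t x t hzt hxt.symm).2 (Or.inr rfl)] at h
      exact h.symm
    have hne : B z y x t ≠ 0 := by
      intro h'
      rw [h'] at e1
      simp at e1
    exact mul_right_cancel₀ hne (e1.trans e2.symm)
end

section
/- In ℝ², let L ≠ L̄ be two distinct lines spanning the plane, and let S, T, S₀, T₀ be four further lines with all relevant cross ratios defined. Then (b(L, S₀, L̄, T) − b(L, S₀, L̄, S)) / (b(L, S₀, L̄, T₀) − 1) = b(T, S, L, S₀) · b(T₀, L, T, S₀), where b denotes the classical projective cross ratio of four lines in ℝ². -/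
/-- The classical cross ratio (in an affine chart of `ℝP¹`). -/
noncomputable def crossRatio (x y z t : ℝ) : ℝ := ((x - y) * (z - t)) / ((x - t) * (z - y))

/-! For fixed `x y z`, `t ↦ crossRatio x y z t` is the Möbius map sending `x, y, z` to `∞, 1, 0`,
so the difference of two of its values is a constant times `(t - u) / ((x - t) * (x - u))`. Writing
`1` as its value at `S₀`, numerator and denominator of the left-hand side are both such
differences; the constant cancels, and what is left is the product of cross ratios on the right. -/

theorem crossRatio_eq_one_at_second {x y : ℝ} (z : ℝ) (hxy : x ≠ y) (hzy : z ≠ y) :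
    crossRatio x y z y = 1 :=
  div_self (mul_ne_zero (sub_ne_zero.2 hxy) (sub_ne_zero.2 hzy))

theorem crossRatio_sub_crossRatio {x t u : ℝ} (y z : ℝ) (hxt : x ≠ t) (hxu : x ≠ u) :
    crossRatio x y z t - crossRatio x y z u =
      (x - y) * (z - x) * (t - u) / ((z - y) * (x - t) * (x - u)) := by
  rcases eq_or_ne z y with rfl | hzy
  · simp [crossRatio]
  have := sub_ne_zero.2 hxt
  have := sub_ne_zero.2 hxu
  have := sub_ne_zero.2 hzy
  unfold crossRatio
  field_simp
  ring

theorem crossRatio_sub_one {x y z t : ℝ} (hxy : x ≠ y) (hzy : z ≠ y) (hxt : x ≠ t) :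
    crossRatio x y z t - 1 = (x - y) * (z - x) * (t - y) / ((z - y) * (x - t) * (x - y)) := by
  rw [← crossRatio_eq_one_at_second z hxy hzy, crossRatio_sub_crossRatio y z hxt hxy]

theorem cusp_gap_crossRatio_identity_general (L Lb S T S₀ T₀ : ℝ)
    (hLS : L ≠ S) (hLT : L ≠ T) (hLS₀ : L ≠ S₀) (hLT₀ : L ≠ T₀)
    (hLbS₀ : Lb ≠ S₀)
    (hTS₀ : T ≠ S₀)
    (hden : crossRatio L S₀ Lb T₀ - 1 ≠ 0) :
    (crossRatio L S₀ Lb T - crossRatio L S₀ Lb S) / (crossRatio L S₀ Lb T₀ - 1) =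
      crossRatio T S L S₀ * crossRatio T₀ L T S₀ := by
  rw [crossRatio_sub_one hLS₀ hLbS₀ hLT₀] at hden ⊢
  rw [crossRatio_sub_crossRatio S₀ Lb hLT hLS]
  have hnum := (div_ne_zero_iff.1 hden).1
  simp only [mul_ne_zero_iff] at hnum
  obtain ⟨⟨-, hLbL⟩, hT₀S₀⟩ := hnum
  have := sub_ne_zero.2 hLS
  have := sub_ne_zero.2 hLT
  have := sub_ne_zero.2 hTS₀
  unfold crossRatio
  field_simp
  ring

/-- The key identity of Proposition 8.3.2, used to compute the cusp gap function for
Frenet curves, with the six lines `L, L̄, S, T, S₀, T₀` written in an affine chart. -/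
theorem cusp_gap_crossRatio_identity (L Lb S T S₀ T₀ : ℝ)
    (hLLb : L ≠ Lb) (hLS : L ≠ S) (hLT : L ≠ T) (hLS₀ : L ≠ S₀) (hLT₀ : L ≠ T₀)
    (hLbS : Lb ≠ S) (hLbT : Lb ≠ T) (hLbS₀ : Lb ≠ S₀) (hLbT₀ : Lb ≠ T₀)
    (hST : S ≠ T) (hSS₀ : S ≠ S₀) (hST₀ : S ≠ T₀)
    (hTS₀ : T ≠ S₀) (hTT₀ : T ≠ T₀) (hS₀T₀ : S₀ ≠ T₀)
    (hden : crossRatio L S₀ Lb T₀ - 1 ≠ 0) :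
    (crossRatio L S₀ Lb T - crossRatio L S₀ Lb S) / (crossRatio L S₀ Lb T₀ - 1) =
      crossRatio T S L S₀ * crossRatio T₀ L T S₀ :=
  cusp_gap_crossRatio_identity_general L Lb S T S₀ T₀ hLS hLT hLS₀ hLT₀ hLbS₀ hTS₀ hden
end
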